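/- Let $0 < \zeta < 1$, $a_1 > 0$, $b > 0$, and suppose $\gamma > 0$ satisfies $\gamma \le \frac{(1-\zeta)^2}{4 a_1 b}$. Let $(y_t)_{t\ge 0}$ be a sequence of nonnegative reals with $y_0 \le \frac{2\gamma b}{1-\zeta}$ and $y_{t+1} \le (\zeta + a_1 y_t) y_t + \gamma b$ for all $t$. Then $y_t \le \frac{2\gamma b}{1-\zeta}$ for all $t \ge 0$. -/

import Mathlib

/-! The interval `[0, 2γb/(1-ζ)]` is invariant under `x ↦ (ζ + a₁x)x + γb`: on it the step-size
condition gives `a₁x ≤ (1-ζ)/2`, so the map is at most `((1+ζ)/2)·x + γb`, an affine contraction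
whose fixed point is exactly `2γb/(1-ζ)`. -/

lemma momentum_step_le_bound {ζ a₁ b γ x : ℝ} (hζ0 : 0 ≤ ζ) (hζ1 : ζ < 1) (ha₁ : 0 ≤ a₁)
    (hγ : 4 * a₁ * γ * b ≤ (1 - ζ) ^ 2) (hx0 : 0 ≤ x) (hx : x ≤ 2 * γ * b / (1 - ζ)) :
    (ζ + a₁ * x) * x + γ * b ≤ 2 * γ * b / (1 - ζ) := by
  set B := 2 * γ * b / (1 - ζ) with hB
  have h1ζ : 0 < 1 - ζ := sub_pos.mpr hζ1
  have hγb : γ * b = (1 - ζ) / 2 * B := by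
    rw [hB]
    field_simp
  have ha₁B : a₁ * B ≤ (1 - ζ) / 2 := by
    rw [hB, mul_div_assoc', div_le_div_iff₀ h1ζ two_pos]
    nlinarith
  have ha₁x : a₁ * x ≤ (1 - ζ) / 2 := (mul_le_mul_of_nonneg_left hx ha₁).trans ha₁B
  calc (ζ + a₁ * x) * x + γ * b
      ≤ (1 + ζ) / 2 * x + γ * b := by nlinarith
    _ ≤ (1 + ζ) / 2 * B + (1 - ζ) / 2 * B := by rw [hγb]; gcongr
    _ = B := by ring

theorem stmt_10_general (ζ a₁ b γ : ℝ) (hζ0 : 0 < ζ) (hζ1 : ζ < 1)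
    (ha₁ : 0 < a₁) (hb : 0 < b)
    (hγle : γ ≤ (1 - ζ) ^ 2 / (4 * a₁ * b))
    (y : ℕ → ℝ) (hy_nonneg : ∀ t, 0 ≤ y t)
    (hy0 : y 0 ≤ 2 * γ * b / (1 - ζ))
    (hrec : ∀ t, y (t + 1) ≤ (ζ + a₁ * y t) * y t + γ * b) :
    ∀ t, y t ≤ 2 * γ * b / (1 - ζ) := by
  have hγ' : 4 * a₁ * γ * b ≤ (1 - ζ) ^ 2 := by
    rw [le_div_iff₀ (by positivity)] at hγle
    linarith
  intro t
  induction t with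
  | zero => exact hy0
  | succ t ih =>
    exact (hrec t).trans
      (momentum_step_le_bound hζ0.le hζ1 ha₁.le hγ' (hy_nonneg t) ih)

/-- Boundedness of the momentum norm in Riemannian SGD with momentum:
if `y₀ ≤ 2γb/(1-ζ)` and `y_{t+1} ≤ (ζ + a₁ y_t) y_t + γ b` with
`γ ≤ (1-ζ)²/(4a₁b)`, then `y_t ≤ 2γb/(1-ζ)` for all `t`. -/
theorem stmt_10 (ζ a₁ b γ : ℝ) (hζ0 : 0 < ζ) (hζ1 : ζ < 1)
    (ha₁ : 0 < a₁) (hb : 0 < b) (hγ : 0 < γ)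
    (hγle : γ ≤ (1 - ζ) ^ 2 / (4 * a₁ * b))
    (y : ℕ → ℝ) (hy_nonneg : ∀ t, 0 ≤ y t)
    (hy0 : y 0 ≤ 2 * γ * b / (1 - ζ))
    (hrec : ∀ t, y (t + 1) ≤ (ζ + a₁ * y t) * y t + γ * b) :
    ∀ t, y t ≤ 2 * γ * b / (1 - ζ) :=
  stmt_10_general ζ a₁ b γ hζ0 hζ1 ha₁ hb hγle y hy_nonneg hy0 hrec
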